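/- Fix integers k ≥ 1 and N with N² ≥ k, and reals λ̄ > 0 and Ñ ∈ N with Ñ ≤ N. Then Σ_{k'≥1} (e^{−λ̄} λ̄^{k'}/k'!)(log k'! + k' log N²) − Σ_{k'=1}^{Ñ²} (e^{−λ̄} λ̄^{k'} C(N², k')/N^{2k'}) log k'! ≤ λ̄ log N² + Σ_{k'=1}^{Ñ²} e^{−λ̄} λ̄^{k'} log k'! (1/k'! − C(N², k')/N^{2k'}) + (1 − Σ_{k'=0}^{Ñ²−2} e^{−λ̄} λ̄^{k'}/k'!) λ̄². -/

import Mathlib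

/-!
With Poisson weights `pₙ = e^{-λ} λⁿ / n!`, the mean identity `∑ n pₙ = λ` turns the first
series into `∑ pₙ log n! + λ log N²`, which cancels the `λ log N²` on the right, and the two
finite sums against `C(N², n) / N^{2n}` cancel as well. What remains is the tail bound
`∑_{n > m} pₙ log n! ≤ λ² (1 - ∑_{n < m - 1} pₙ)`: it follows termwise from
`log n! ≤ n (n - 1)` and `p_{n+2} (n + 2)(n + 1) = λ² pₙ`.
-/

open Real Finset
open scoped Nat

lemma Real.log_factorial_le (n : ℕ) : log n ! ≤ n * (n - 1) := by
  rcases n.eq_zero_or_pos with rfl | hn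
  · simp
  have hn' : (0 : ℝ) < n := by exact_mod_cast hn
  calc log n ! ≤ log ((n : ℝ) ^ n) := by
        gcongr
        exact_mod_cast n.factorial_le_pow
    _ = n * log n := log_pow n n
    _ ≤ n * (n - 1) := by gcongr; exact log_le_sub_one_of_pos hn'

noncomputable def poissonWeight (lam : ℝ) (n : ℕ) : ℝ :=
  exp (-lam) * lam ^ n / n !

lemma poissonWeight_nonneg {lam : ℝ} (hlam : 0 ≤ lam) (n : ℕ) :
    0 ≤ poissonWeight lam n := by
  unfold poissonWeight
  positivity

lemma hasSum_poissonWeight (lam : ℝ) : HasSum (poissonWeight lam) 1 := by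
  have h := (NormedSpace.expSeries_div_hasSum_exp lam).mul_left (exp (-lam))
  rw [← Real.exp_eq_exp_ℝ, ← exp_add, neg_add_cancel, exp_zero] at h
  have hw : poissonWeight lam = fun n => exp (-lam) * (lam ^ n / n !) :=
    funext fun n => mul_div_assoc _ _ _
  rwa [hw]

lemma poissonWeight_succ_mul (lam : ℝ) (n : ℕ) :
    poissonWeight lam (n + 1) * (n + 1) = lam * poissonWeight lam n := by
  unfold poissonWeight
  rw [Nat.factorial_succ]
  push_cast
  field_simp
  ring

lemma hasSum_poissonWeight_mul_natCast (lam : ℝ) :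
    HasSum (fun n => poissonWeight lam n * n) lam := by
  refine (hasSum_nat_add_iff' 1).mp ?_
  simpa [poissonWeight_succ_mul] using (hasSum_poissonWeight lam).mul_left lam

lemma poissonWeight_add_two_mul_log_factorial_le {lam : ℝ} (hlam : 0 ≤ lam) (n : ℕ) :
    poissonWeight lam (n + 2) * log (n + 2)! ≤ lam ^ 2 * poissonWeight lam n := by
  have h₁ := poissonWeight_succ_mul lam (n + 1)
  have h₀ := poissonWeight_succ_mul lam n
  push_cast at h₁
  calc poissonWeight lam (n + 2) * log (n + 2)!
      ≤ poissonWeight lam (n + 2) * ((n + 2) * (n + 1)) := by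
        gcongr
        · exact poissonWeight_nonneg hlam _
        · exact (Real.log_factorial_le _).trans_eq (by push_cast; ring)
    _ = lam ^ 2 * poissonWeight lam n := by linear_combination (n + 1 : ℝ) * h₁ + lam * h₀

lemma summable_poissonWeight_mul_log_factorial {lam : ℝ} (hlam : 0 ≤ lam) :
    Summable fun n => poissonWeight lam n * log n ! := by
  rw [← summable_nat_add_iff 2]
  refine ((hasSum_poissonWeight lam).summable.mul_left (lam ^ 2)).of_nonneg_of_le (fun n => ?_)
    (poissonWeight_add_two_mul_log_factorial_le hlam)
  exact mul_nonneg (poissonWeight_nonneg hlam _)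
    (log_nonneg (by exact_mod_cast Nat.factorial_pos _))

lemma tsum_poissonWeight_mul_log_factorial_le {lam : ℝ} (hlam : 0 ≤ lam) (m : ℕ) :
    ∑' n, poissonWeight lam n * log n ! ≤
      ∑ n ∈ Icc 1 m, poissonWeight lam n * log n !
        + (1 - ∑ n ∈ range (m - 1), poissonWeight lam n) * lam ^ 2 := by
  set f := fun n => poissonWeight lam n * log n !
  have hf : Summable f := summable_poissonWeight_mul_log_factorial hlam
  -- split after `m - 1 + 2` terms: that is `m + 1` unless `m = 0`, where the extra `f 1` vanishes
  have head : ∑ n ∈ range (m - 1 + 2), f n = ∑ n ∈ Icc 1 m, f n := by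
    refine (sum_subset (fun n hn => ?_) fun n hn hn' => ?_).symm
    · simp only [mem_Icc, mem_range] at hn ⊢
      omega
    · simp only [mem_Icc, mem_range] at hn hn'
      obtain rfl | rfl : n = 0 ∨ n = 1 := by omega
      all_goals simp [f]
  have tail : ∑' n, f (n + (m - 1 + 2)) ≤ ∑' n, lam ^ 2 * poissonWeight lam (n + (m - 1)) :=
    Summable.tsum_le_tsum (fun n => poissonWeight_add_two_mul_log_factorial_le hlam _)
      ((summable_nat_add_iff _).mpr hf)
      (((summable_nat_add_iff _).mpr (hasSum_poissonWeight lam).summable).mul_left _)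
  have rest :
      ∑' n, poissonWeight lam (n + (m - 1)) = 1 - ∑ n ∈ range (m - 1), poissonWeight lam n :=
    ((hasSum_nat_add_iff' _).mpr (hasSum_poissonWeight lam)).tsum_eq
  rw [← hf.sum_add_tsum_nat_add (m - 1 + 2), head]
  rw [tsum_mul_left, rest] at tail
  linarith

theorem poisson_bookkeeping_bound_general (N Nt : ℕ) (lam : ℝ) (hlam : 0 < lam) :
    (∑' k' : ℕ, Real.exp (-lam) * lam ^ k' / (Nat.factorial k' : ℝ)
          * (Real.log (Nat.factorial k' : ℝ) + (k' : ℝ) * Real.log ((N : ℝ) ^ 2)))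
        - ∑ k' ∈ Finset.Icc 1 (Nt ^ 2),
            Real.exp (-lam) * lam ^ k' * ((N ^ 2).choose k' : ℝ) / (N : ℝ) ^ (2 * k')
              * Real.log (Nat.factorial k' : ℝ)
      ≤ lam * Real.log ((N : ℝ) ^ 2)
          + ∑ k' ∈ Finset.Icc 1 (Nt ^ 2),
              Real.exp (-lam) * lam ^ k' * Real.log (Nat.factorial k' : ℝ)
                * (1 / (Nat.factorial k' : ℝ) - ((N ^ 2).choose k' : ℝ) / (N : ℝ) ^ (2 * k'))
          + (1 - ∑ k' ∈ Finset.range (Nt ^ 2 - 1),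
                Real.exp (-lam) * lam ^ k' / (Nat.factorial k' : ℝ)) * lam ^ 2 := by
  set c := log ((N : ℝ) ^ 2)
  have hmean : HasSum (fun n : ℕ => exp (-lam) * lam ^ n / n ! * (log n ! + n * c))
      (∑' n, poissonWeight lam n * log n ! + lam * c) := by
    convert (summable_poissonWeight_mul_log_factorial hlam.le).hasSum.add
      ((hasSum_poissonWeight_mul_natCast lam).mul_right c) using 2 with n
    simp only [poissonWeight]
    ring
  have hsplit : ∑ n ∈ Icc 1 (Nt ^ 2),
        exp (-lam) * lam ^ n * log n !
          * (1 / (n ! : ℝ) - ((N ^ 2).choose n : ℝ) / (N : ℝ) ^ (2 * n))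
      = ∑ n ∈ Icc 1 (Nt ^ 2), poissonWeight lam n * log n !
        - ∑ n ∈ Icc 1 (Nt ^ 2),
            exp (-lam) * lam ^ n * ((N ^ 2).choose n : ℝ) / (N : ℝ) ^ (2 * n) * log n ! := by
    rw [← sum_sub_distrib]
    refine sum_congr rfl fun n _ => ?_
    simp only [poissonWeight]
    ring
  have htail := tsum_poissonWeight_mul_log_factorial_le hlam.le (Nt ^ 2)
  rw [hmean.tsum_eq, hsplit]
  simp only [poissonWeight] at htail ⊢
  linarith

/-- The bookkeeping inequality of Lemma 11 (Appendix H) of the paper. -/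
theorem poisson_bookkeeping_bound (k N Nt : ℕ) (hk : 1 ≤ k) (hkN : k ≤ N ^ 2)
    (lam : ℝ) (hlam : 0 < lam) (hNt : Nt ≤ N) :
    (∑' k' : ℕ, Real.exp (-lam) * lam ^ k' / (Nat.factorial k' : ℝ)
          * (Real.log (Nat.factorial k' : ℝ) + (k' : ℝ) * Real.log ((N : ℝ) ^ 2)))
        - ∑ k' ∈ Finset.Icc 1 (Nt ^ 2),
            Real.exp (-lam) * lam ^ k' * ((N ^ 2).choose k' : ℝ) / (N : ℝ) ^ (2 * k')
              * Real.log (Nat.factorial k' : ℝ)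
      ≤ lam * Real.log ((N : ℝ) ^ 2)
          + ∑ k' ∈ Finset.Icc 1 (Nt ^ 2),
              Real.exp (-lam) * lam ^ k' * Real.log (Nat.factorial k' : ℝ)
                * (1 / (Nat.factorial k' : ℝ) - ((N ^ 2).choose k' : ℝ) / (N : ℝ) ^ (2 * k'))
          + (1 - ∑ k' ∈ Finset.range (Nt ^ 2 - 1),
                Real.exp (-lam) * lam ^ k' / (Nat.factorial k' : ℝ)) * lam ^ 2 :=
  poisson_bookkeeping_bound_general N Nt lam hlam
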